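/- arXiv:1709.03589 — 5 statements merged into one kernel-verified Lean document; each statement's English description precedes it below -/
import Mathlib

section
/- Let V be an n-dimensional real vector space, let (F,G,H) be a transverse triple of complete flags in V, and let i,j,k ≥ 1 be integers with i+j+k = n. Then the eruption endomorphism A^{i,j,k}_{F,G,H} fixes the flag F, i.e. A^{i,j,k}_{F,G,H}(F^(m)) = F^(m) for every 0 ≤ m ≤ n. -/
/-- `F` is a complete flag in an `n`-dimensional real vector space:
`F 0 ⊆ F 1 ⊆ ⋯ ⊆ F n` with `dim (F l) = l` for `0 ≤ l ≤ n`. -/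
def IsFlag (n : ℕ) {V : Type*} [AddCommGroup V] [Module ℝ V]
    (F : ℕ → Submodule ℝ V) : Prop :=
  (∀ l, l < n → F l ≤ F (l + 1)) ∧ ∀ l, l ≤ n → Module.finrank ℝ (F l) = l

/-- A triple of flags is transverse if `F a + G b + H c = V` whenever `a + b + c = n`. -/
def TransverseTriple (n : ℕ) {V : Type*} [AddCommGroup V] [Module ℝ V]
    (F G H : ℕ → Submodule ℝ V) : Prop :=
  ∀ a b c : ℕ, a + b + c = n → F a ⊔ G b ⊔ H c = ⊤

/-- A pair of flags is transverse if `F a + G (n - a) = V` for all `0 ≤ a ≤ n`. -/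
def TransversePair (n : ℕ) {V : Type*} [AddCommGroup V] [Module ℝ V]
    (F G : ℕ → Submodule ℝ V) : Prop :=
  ∀ a, a ≤ n → F a ⊔ G (n - a) = ⊤

/-- `A` is the `(i,j,k)`-eruption endomorphism of the triple `(F,G,H)`: it acts as the
scalar `(n - i)/n` on `F i` and as the scalar `-i/n` on `G j + H k`. -/
def IsEruption (n i j k : ℕ) {V : Type*} [AddCommGroup V] [Module ℝ V]
    (F G H : ℕ → Submodule ℝ V) (A : Module.End ℝ V) : Prop :=
  (∀ v ∈ F i, A v = (((n : ℝ) - (i : ℝ)) / (n : ℝ)) • v) ∧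
  (∀ v ∈ G j ⊔ H k, A v = (-(i : ℝ) / (n : ℝ)) • v)

/-- `A` is the `(i, n-i)`-shearing endomorphism of the pair `(F,G)`: it acts as the
scalar `(n - i)/n` on `F i` and as the scalar `-i/n` on `G (n - i)`. -/
def IsShearing (n i : ℕ) {V : Type*} [AddCommGroup V] [Module ℝ V]
    (F G : ℕ → Submodule ℝ V) (A : Module.End ℝ V) : Prop :=
  (∀ v ∈ F i, A v = (((n : ℝ) - (i : ℝ)) / (n : ℝ)) • v) ∧
  (∀ v ∈ G (n - i), A v = (-(i : ℝ) / (n : ℝ)) • v)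

/-!
By transversality `F i + (G j + H k) = V`, and `A` acts on the two summands by the nonzero
scalars `(n - i)/n` and `-i/n`. Hence `A` maps every subspace of `F i` onto itself, and also
every subspace `U ⊇ F i`, since the modular law gives `U = F i + (U ∩ (G j + H k))`.
-/

namespace Submodule

variable {K V : Type*} [DivisionRing K] [AddCommGroup V] [Module K V]

theorem map_eq_self_of_forall_eq_smul (A : Module.End K V) {p : Submodule K V} {c : K}
    (hc : c ≠ 0) (hA : ∀ v ∈ p, A v = c • v) : p.map A = p := by
  refine le_antisymm ?_ fun v hv => ⟨c⁻¹ • v, p.smul_mem _ hv, ?_⟩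
  · rintro _ ⟨v, hv, rfl⟩
    rw [hA v hv]
    exact p.smul_mem c hv
  · rw [map_smul, hA v hv, smul_smul, inv_mul_cancel₀ hc, one_smul]

theorem map_eq_self_of_le_of_sup_eq_top (A : Module.End K V) {p q r : Submodule K V}
    {a b : K} (ha : a ≠ 0) (hb : b ≠ 0) (hpA : ∀ v ∈ p, A v = a • v)
    (hqA : ∀ v ∈ q, A v = b • v) (hpq : p ⊔ q = ⊤) (hpr : p ≤ r) : r.map A = r := by
  have hr : p ⊔ r ⊓ q = r := by
    rw [inf_comm, ← sup_inf_assoc_of_le q hpr, hpq, top_inf_eq]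
  rw [← hr, map_sup, map_eq_self_of_forall_eq_smul A ha hpA,
    map_eq_self_of_forall_eq_smul A hb fun v hv => hqA v (mem_inf.mp hv).2]

end Submodule

theorem IsFlag.mono {n : ℕ} {V : Type*} [AddCommGroup V] [Module ℝ V] {F : ℕ → Submodule ℝ V}
    (hF : IsFlag n F) {a b : ℕ} (hab : a ≤ b) (hb : b ≤ n) : F a ≤ F b := by
  induction b, hab using Nat.le_induction with
  | base => exact le_rfl
  | succ b _ ih => exact (ih (by omega)).trans (hF.1 b (by omega))

theorem statement0_general (n : ℕ) (V : Type*) [AddCommGroup V] [Module ℝ V]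
    (F G H : ℕ → Submodule ℝ V) (hF : IsFlag n F)
    (hFGH : TransverseTriple n F G H)
    (i j k : ℕ) (hi : 1 ≤ i) (hj : 1 ≤ j) (hijk : i + j + k = n)
    (A : Module.End ℝ V) (hA : IsEruption n i j k F G H A) :
    ∀ m, m ≤ n → Submodule.map A (F m) = F m := by
  intro m hm
  have hn : (n : ℝ) ≠ 0 := Nat.cast_ne_zero.mpr (by omega)
  have hFi : ((n : ℝ) - i) / n ≠ 0 :=
    div_ne_zero (sub_ne_zero.mpr (Nat.cast_injective.ne (by omega))) hn
  have hGH : -(i : ℝ) / n ≠ 0 := div_ne_zero (neg_ne_zero.mpr (Nat.cast_ne_zero.mpr (by omega))) hn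
  rcases le_total m i with hmi | him
  · exact Submodule.map_eq_self_of_forall_eq_smul A hFi
      fun v hv => hA.1 v (hF.mono hmi (by omega) hv)
  · exact Submodule.map_eq_self_of_le_of_sup_eq_top A hFi hGH hA.1 hA.2
      (by rw [← sup_assoc]; exact hFGH i j k hijk) (hF.mono him hm)

theorem statement0 (n : ℕ) (V : Type*) [AddCommGroup V] [Module ℝ V] [FiniteDimensional ℝ V]
    (hV : Module.finrank ℝ V = n)
    (F G H : ℕ → Submodule ℝ V) (hF : IsFlag n F) (hG : IsFlag n G) (hH : IsFlag n H)
    (hFGH : TransverseTriple n F G H)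
    (i j k : ℕ) (hi : 1 ≤ i) (hj : 1 ≤ j) (hk : 1 ≤ k) (hijk : i + j + k = n)
    (A : Module.End ℝ V) (hA : IsEruption n i j k F G H A) :
    ∀ m, m ≤ n → Submodule.map A (F m) = F m :=
  statement0_general n V F G H hF hFGH i j k hi hj hijk A hA
end

section
/- Let V be an n-dimensional real vector space, let (F,G,H) be a transverse triple of complete flags in V with adapted bases (f_l), (g_l), (h_l), and let i,j,k ≥ 1 be integers with i+j+k = n; write A := A^{i,j,k}_{F,G,H}. For every real t, the family of subspaces (exp(tA)(G^(m)))_{0≤m≤n} is a complete flag, denoted exp(tA)·G, with adapted basis (exp(tA)g_1,…,exp(tA)g_n). For all integers i',j',k' ≥ 1 with i'+j'+k' = n, the six quantities in the defining formula of the triple ratio T_{i',j',k'}(F, exp(tA)·G, H), computed with these adapted bases, are nonzero, and T_{i',j',k'}(F, exp(tA)·G, H) = T_{i',j',k'}(F,G,H) if (i',j',k') ≠ (i,j,k), while T_{i,j,k}(F, exp(tA)·G, H) = e^t · T_{i,j,k}(F,G,H). -/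
/-- `f` (whose values `f 0, …, f (n-1)` matter) is a basis adapted to the flag `F`:
`F l` is the span of `f 0, …, f (l-1)` for all `0 ≤ l ≤ n`. -/
def Adapted (n : ℕ) {V : Type*} [AddCommGroup V] [Module ℝ V]
    (F : ℕ → Submodule ℝ V) (f : ℕ → V) : Prop :=
  ∀ l, l ≤ n → F l = Submodule.span ℝ (f '' Set.Iio l)

/-- `F^(a) ∧ G^(b) ∧ H^(c) := ω (f 0, …, f (a-1), g 0, …, g (b-1), h 0, …, h (c-1))`,
for `a + b + c = n`. -/
noncomputable def wedge (n : ℕ) {V : Type*} [AddCommGroup V] [Module ℝ V]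
    (ω : AlternatingMap ℝ V ℝ (Fin n)) (f g h : ℕ → V) (a b c : ℕ) : ℝ :=
  ω fun l : Fin n =>
    if (l : ℕ) < a then f (l : ℕ)
    else if (l : ℕ) < a + b then g ((l : ℕ) - a)
    else h ((l : ℕ) - a - b)

/-- The triple ratio `T_{i,j,k}(F,G,H)` computed with adapted bases `f, g, h` of the
flags `F, G, H` and the nonzero alternating `n`-form `ω`. -/
noncomputable def tripleRatio (n : ℕ) {V : Type*} [AddCommGroup V] [Module ℝ V]
    (ω : AlternatingMap ℝ V ℝ (Fin n)) (f g h : ℕ → V) (i j k : ℕ) : ℝ :=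
  (wedge n ω f g h (i + 1) j (k - 1) / wedge n ω f g h (i + 1) (j - 1) k) *
  (wedge n ω f g h (i - 1) (j + 1) k / wedge n ω f g h i (j + 1) (k - 1)) *
  (wedge n ω f g h i (j - 1) (k + 1) / wedge n ω f g h (i - 1) j (k + 1))

/-- The exponential of an endomorphism of a finite-dimensional real vector space. -/
noncomputable def expEnd {V : Type*} [NormedAddCommGroup V] [NormedSpace ℝ V]
    [FiniteDimensional ℝ V] (A : Module.End ℝ V) : Module.End ℝ V :=
  (NormedSpace.exp (LinearMap.toContinuousLinearMap A)).toLinearMap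

open Submodule Finset

namespace AlternatingMap

section CommRing

variable {R M N ι : Type*} [CommRing R] [AddCommGroup M] [Module R M] [AddCommGroup N]
  [Module R N]

theorem map_update_eq_zero_of_mem_span [DecidableEq ι] (ω : M [⋀^ι]→ₗ[R] N) (x : ι → M)
    {P : Set ι} {l : ι} (hl : l ∉ P) {y : M} (hy : y ∈ span R (x '' P)) :
    ω (Function.update x l y) = 0 := by
  induction hy using Submodule.span_induction with
  | mem y hy =>
    obtain ⟨m, hm, rfl⟩ := hy
    exact ω.map_update_self x (ne_of_mem_of_not_mem hm hl).symm
  | zero => exact ω.map_update_zero x l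
  | add y z _ _ hy hz => rw [ω.map_update_add, hy, hz, add_zero]
  | smul _ y _ hy => rw [ω.map_update_smul, hy, smul_zero]

theorem map_add_eq_of_mem_span [Fintype ι] (ω : M [⋀^ι]→ₗ[R] N) (v w : ι → M) (P : Set ι)
    (hP : ∀ l ∈ P, w l = 0) (hw : ∀ l, w l ∈ span R (v '' P)) : ω (v + w) = ω v := by
  classical
  change ω (fun l => v l + w l) = ω v
  suffices ∀ s : Finset ι, ω (fun l => if l ∈ s then v l + w l else v l) = ω v by
    simpa only [mem_univ, if_true] using this univ
  intro s
  induction s using Finset.induction with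
  | empty => simp
  | insert a s ha ih =>
    set x : ι → M := fun l => if l ∈ s then v l + w l else v l
    have hx : (fun l => if l ∈ insert a s then v l + w l else v l) =
        Function.update x a (v a + w a) := by
      ext l
      by_cases hl : l = a <;> simp [x, hl, ha]
    have hxa : Function.update x a (v a) = x := by
      ext l
      by_cases hl : l = a <;> simp [x, hl, ha]
    have hxP : x '' P = v '' P := Set.image_congr fun l hl => by simp [x, hP l hl]
    rw [hx, ω.map_update_add, hxa, ih, add_eq_left]
    by_cases haP : a ∈ P
    · rw [hP a haP, ω.map_update_zero]
    · exact ω.map_update_eq_zero_of_mem_span x haP (hxP ▸ hw a)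

end CommRing

section Field

variable {K M N ι : Type*} [Field K] [AddCommGroup M] [Module K M] [AddCommGroup N] [Module K N]

theorem map_eq_prod_smul_of_sub_mem_span [Fintype ι] (ω : M [⋀^ι]→ₗ[K] N) {u u' : ι → M}
    {c : ι → K} (P : Set ι) (hP : ∀ l ∈ P, u' l = c l • u l) (hc : ∀ l ∈ P, c l ≠ 0)
    (hS : ∀ l ∉ P, u' l - c l • u l ∈ span K (u '' P)) : ω u' = (∏ l, c l) • ω u := by
  set v : ι → M := fun l => c l • u l
  have hspan : span K (u '' P) ≤ span K (v '' P) := span_le.2 <| by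
    rintro _ ⟨l, hl, rfl⟩
    have : u l = (c l)⁻¹ • v l := by simp [v, smul_smul, inv_mul_cancel₀ (hc l hl)]
    rw [this]
    exact smul_mem _ _ (subset_span ⟨l, hl, rfl⟩)
  rw [← ω.map_smul_univ, ← add_sub_cancel v u',
    ω.map_add_eq_of_mem_span v (u' - v) P (fun l hl => sub_eq_zero.2 (hP l hl))]
  intro l
  by_cases hl : l ∈ P
  · simp [v, hP l hl]
  · exact hspan (hS l hl)

theorem map_ne_zero_of_top_le_span [Fintype ι] {ω : M [⋀^ι]→ₗ[K] K} (hω : ω ≠ 0) {v : ι → M}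
    (hv : ⊤ ≤ span K (Set.range v)) (hcard : Fintype.card ι = Module.finrank K M) : ω v ≠ 0 := by
  simpa using (ω.map_basis_ne_zero_iff (basisOfTopLeSpanOfCardEqFinrank v hv hcard)).2 hω

theorem map_comp_eq_det_mul [FiniteDimensional K M] {n : ℕ} (hM : Module.finrank K M = n)
    (ω : M [⋀^Fin n]→ₗ[K] K) (E : M →ₗ[K] M) (v : Fin n → M) :
    ω (E ∘ v) = LinearMap.det E * ω v := by
  rw [ω.eq_smul_basis_det (Module.finBasisOfFinrankEq K M hM)]
  simp only [smul_apply, Module.Basis.det_comp, smul_eq_mul]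
  ring

end Field

end AlternatingMap

section Exp

variable {V : Type*} [NormedAddCommGroup V] [NormedSpace ℝ V] [FiniteDimensional ℝ V]

theorem expEnd_apply_of_apply_eq_smul {A : Module.End ℝ V} {c : ℝ} {v : V} (hv : A v = c • v) :
    expEnd A v = Real.exp c • v := by
  set B := LinearMap.toContinuousLinearMap A
  have hpow : ∀ m : ℕ, (B ^ m) v = c ^ m • v := by
    intro m
    induction m with
    | zero => simp
    | succ m ih =>
      rw [pow_succ', mul_apply_eq_comp, ih,
        map_smul, LinearMap.coe_toContinuousLinearMap', hv, smul_smul, pow_succ]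
  have hB := (NormedSpace.exp_series_hasSum_exp' (𝕂 := ℝ) B).mapL
    (ContinuousLinearMap.apply ℝ V v)
  have hc := (NormedSpace.exp_series_hasSum_exp' (𝕂 := ℝ) c).smul_const v
  rw [Real.exp_eq_exp_ℝ]
  refine hB.unique ?_
  convert hc using 2 with m
  simp [hpow, smul_smul]

theorem expEnd_injective (A : Module.End ℝ V) : Function.Injective (expEnd A) :=
  ((Module.End.isUnit_iff _).1
    ((NormedSpace.isUnit_exp_of_mem_ball (𝕂 := ℝ) (x := LinearMap.toContinuousLinearMap A)
      ((NormedSpace.expSeries_radius_eq_top ℝ (V →L[ℝ] V)).symm ▸ edist_lt_top _ _)).map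
        ContinuousLinearMap.toLinearMapRingHom)).1

end Exp

section Flags

variable {n : ℕ} {V W : Type*} [AddCommGroup V] [Module ℝ V] [AddCommGroup W] [Module ℝ W]
  {F : ℕ → Submodule ℝ V} {f : ℕ → V}

theorem IsFlag.map (hF : IsFlag n F) {E : V →ₗ[ℝ] W} (hE : Function.Injective E) :
    IsFlag n fun m => (F m).map E :=
  ⟨fun l hl => map_mono (hF.1 l hl), fun l hl =>
    (equivMapOfInjective E hE (F l)).finrank_eq.symm.trans (hF.2 l hl)⟩

theorem Adapted.map (hf : Adapted n F f) (E : V →ₗ[ℝ] W) :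
    Adapted n (fun m => (F m).map E) fun l => E (f l) := fun l hl => by
  change (F l).map E = _
  rw [hf l hl, map_span, ← Set.image_comp]
  rfl

theorem Adapted.mem (hf : Adapted n F f) {m a : ℕ} (hm : m < a) (ha : a ≤ n) : f m ∈ F a :=
  hf a ha ▸ subset_span ⟨m, hm, rfl⟩

theorem Adapted.mono (hf : Adapted n F f) {a b : ℕ} (hab : a ≤ b) (hb : b ≤ n) : F a ≤ F b := by
  rw [hf a (hab.trans hb), hf b hb]
  exact span_mono (Set.image_mono (Set.Iio_subset_Iio hab))

end Flags

section BlockFamily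

variable {α : Type*} {n a b : ℕ}

def blockFamily (n a b : ℕ) (f g h : ℕ → α) : Fin n → α := fun l =>
  if (l : ℕ) < a then f l else if (l : ℕ) < a + b then g (l - a) else h (l - a - b)

theorem wedge_eq_blockFamily {V : Type*} [AddCommGroup V] [Module ℝ V]
    (ω : V [⋀^Fin n]→ₗ[ℝ] ℝ) (f g h : ℕ → V) (a b c : ℕ) :
    wedge n ω f g h a b c = ω (blockFamily n a b f g h) := rfl

variable {f g h : ℕ → α} {l : Fin n}

theorem blockFamily_of_lt (hl : (l : ℕ) < a) : blockFamily n a b f g h l = f l :=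
  if_pos hl

theorem blockFamily_of_le_of_lt (hal : a ≤ l) (hlb : (l : ℕ) < a + b) :
    blockFamily n a b f g h l = g (l - a) := by
  rw [blockFamily, if_neg hal.not_gt, if_pos hlb]

theorem blockFamily_of_le (hl : a + b ≤ l) : blockFamily n a b f g h l = h (l - a - b) := by
  rw [blockFamily, if_neg (by omega), if_neg hl.not_gt]

theorem prod_blockFamily {M : Type*} [CommMonoid M] {c : ℕ} (habc : a + b + c = n)
    (f g h : ℕ → M) :
    ∏ l, blockFamily n a b f g h l =
      (∏ m ∈ range a, f m) * (∏ m ∈ range b, g m) * ∏ m ∈ range c, h m := by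
  subst habc
  unfold blockFamily
  rw [Fin.prod_univ_eq_prod_range
    (fun l => if l < a then f l else if l < a + b then g (l - a) else h (l - a - b)),
    prod_range_add, prod_range_add]
  congr 1
  congr 1
  all_goals refine prod_congr rfl fun m hm => ?_
  all_goals simp only [mem_range] at hm
  · simp [hm]
  · simp [hm]
  · simp [show ¬ a + b + m < a by omega, show a + b + m - a - b = m by omega]

end BlockFamily

section Wedge

variable {n : ℕ} {V : Type*} [AddCommGroup V] [Module ℝ V] {ω : V [⋀^Fin n]→ₗ[ℝ] ℝ}
  {F G H : ℕ → Submodule ℝ V} {f g h : ℕ → V} {a b c : ℕ}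

theorem sup_le_span_image_blockFamily (hf : Adapted n F f) (hg : Adapted n G g)
    (hh : Adapted n H h) (habc : a + b + c = n) {j : ℕ} (hjb : j ≤ b) :
    F a ⊔ G j ⊔ H c ≤
      span ℝ (blockFamily n a b f g h '' {l | (l : ℕ) < a + j ∨ a + b ≤ l}) := by
  rw [hf a (by omega), hg j (by omega), hh c (by omega)]
  simp only [sup_le_iff, span_le]
  refine ⟨⟨?_, ?_⟩, ?_⟩ <;> rintro _ ⟨m, hm, rfl⟩ <;> simp only [Set.mem_Iio] at hm
  · exact subset_span ⟨⟨m, by omega⟩, Or.inl (by simp; omega), blockFamily_of_lt hm⟩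
  · refine subset_span ⟨⟨a + m, by omega⟩, Or.inl (by simp; omega), ?_⟩
    rw [blockFamily_of_le_of_lt (by simp) (by simp; omega)]
    simp
  · refine subset_span ⟨⟨a + b + m, by omega⟩, Or.inr (by simp), ?_⟩
    rw [blockFamily_of_le (by simp)]
    simp [show a + b + m - a - b = m by omega]

theorem wedge_ne_zero [FiniteDimensional ℝ V] (hV : Module.finrank ℝ V = n) (hω : ω ≠ 0)
    (hf : Adapted n F f) (hg : Adapted n G g) (hh : Adapted n H h) (habc : a + b + c = n)
    (hFGH : F a ⊔ G b ⊔ H c = ⊤) : wedge n ω f g h a b c ≠ 0 := by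
  refine AlternatingMap.map_ne_zero_of_top_le_span hω ?_ (by simp [hV])
  rw [← hFGH]
  exact (sup_le_span_image_blockFamily hf hg hh habc le_rfl).trans
    (span_mono (Set.image_subset_range _ _))

theorem wedge_eq_prod_mul_of_sub_mem (hf : Adapted n F f) (hg : Adapted n G g)
    (hh : Adapted n H h) (habc : a + b + c = n) {j : ℕ} (hjb : j ≤ b) {g' : ℕ → V}
    {φ : ℕ → ℝ} (hlow : ∀ m < j, g' m = φ m • g m) (hφ : ∀ m < j, φ m ≠ 0)
    (hhigh : ∀ m < b, j ≤ m → g' m - φ m • g m ∈ F a ⊔ G j ⊔ H c) :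
    wedge n ω f g' h a b c = (∏ m ∈ range b, φ m) * wedge n ω f g h a b c := by
  have hprod : ∏ l, blockFamily n a b 1 φ 1 l = ∏ m ∈ range b, φ m := by
    simp [prod_blockFamily habc]
  rw [wedge_eq_blockFamily, wedge_eq_blockFamily, ← hprod, ← smul_eq_mul]
  refine ω.map_eq_prod_smul_of_sub_mem_span {l | (l : ℕ) < a + j ∨ a + b ≤ l} ?_ ?_ ?_
  · rintro l (hl | hl)
    · rcases lt_or_ge (l : ℕ) a with hla | hla
      · simp [blockFamily_of_lt hla]
      · simp only [blockFamily_of_le_of_lt hla (by omega : (l : ℕ) < a + b)]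
        exact hlow _ (by omega)
    · simp [blockFamily_of_le hl]
  · rintro l (hl | hl)
    · rcases lt_or_ge (l : ℕ) a with hla | hla
      · simp [blockFamily_of_lt hla]
      · rw [blockFamily_of_le_of_lt hla (by omega)]
        exact hφ _ (by omega)
    · simp [blockFamily_of_le hl]
  · intro l hl
    simp only [Set.mem_ofPred_eq, not_or, not_lt, not_le] at hl
    simp only [blockFamily_of_le_of_lt (by omega : a ≤ (l : ℕ)) hl.2]
    exact sup_le_span_image_blockFamily hf hg hh habc hjb (hhigh _ (by omega) (by omega))

theorem det_mul_wedge_eq [FiniteDimensional ℝ V] (hV : Module.finrank ℝ V = n)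
    (E : V →ₗ[ℝ] V) (habc : a + b + c = n) {f' g' h' : ℕ → V} {x y z : ℝ}
    (hf : ∀ m < a, E (f m) = x • f' m) (hg : ∀ m < b, E (g m) = y • g' m)
    (hh : ∀ m < c, E (h m) = z • h' m) :
    LinearMap.det E * wedge n ω f g h a b c = x ^ a * y ^ b * z ^ c * wedge n ω f' g' h' a b c := by
  have hE : E ∘ blockFamily n a b f g h = fun l => blockFamily n a b (fun _ => x) (fun _ => y)
      (fun _ => z) l • blockFamily n a b f' g' h' l := by
    ext l
    simp only [Function.comp_apply, blockFamily]
    split_ifs with h1 h2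
    · exact hf _ h1
    · exact hg _ (by omega)
    · exact hh _ (by omega)
  rw [wedge_eq_blockFamily, wedge_eq_blockFamily, ← ω.map_comp_eq_det_mul hV, hE,
    ω.map_smul_univ, prod_blockFamily habc]
  simp

end Wedge

theorem LinearMap.apply_sub_smul_mem_of_sup_eq_top {R V : Type*} [CommRing R] [AddCommGroup V]
    [Module R V] {U W : Submodule R V} (hUW : U ⊔ W = ⊤) {E : V →ₗ[R] V} {α β : R}
    (hU : ∀ v ∈ U, E v = α • v) (hW : ∀ v ∈ W, E v = β • v) (v : V) : E v - β • v ∈ U := by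
  obtain ⟨p, hp, q, hq, rfl⟩ := mem_sup.1 (hUW ▸ mem_top : v ∈ U ⊔ W)
  rw [map_add, hU p hp, hW q hq, smul_add, add_sub_add_right_eq_sub, ← sub_smul]
  exact U.smul_mem _ hp

def eruptionFactor (i j : ℕ) (s β : ℝ) (a b : ℕ) : ℝ := β ^ b * s ^ min (i - a) (b - j)

section Eruption

variable {n : ℕ} {V : Type*} [AddCommGroup V] [Module ℝ V]
  {ω : V [⋀^Fin n]→ₗ[ℝ] ℝ} {F G H : ℕ → Submodule ℝ V} {f g h : ℕ → V} {i j k : ℕ}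
  {E : V →ₗ[ℝ] V} {s β : ℝ}

theorem det_eq_pow_mul_pow_of_eigen [FiniteDimensional ℝ V] (hV : Module.finrank ℝ V = n)
    (hω : ω ≠ 0) (hf : Adapted n F f) (hg : Adapted n G g) (hh : Adapted n H h)
    (hijk : i + j + k = n) (hFGH : F i ⊔ G j ⊔ H k = ⊤) (hEU : ∀ v ∈ F i, E v = (s * β) • v)
    (hEW : ∀ v ∈ G j ⊔ H k, E v = β • v) : LinearMap.det E = s ^ i * β ^ n := by
  have hdet := det_mul_wedge_eq (ω := ω) hV E hijk (f' := f) (g' := g) (h' := h)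
    (fun m hm => hEU _ (hf.mem hm (by omega)))
    (fun m hm => hEW _ (mem_sup_left (hg.mem hm (by omega))))
    (fun m hm => hEW _ (mem_sup_right (hh.mem hm (by omega))))
  refine mul_right_cancel₀ (wedge_ne_zero hV hω hf hg hh hijk hFGH) (hdet.trans ?_)
  rw [show β ^ n = β ^ i * β ^ j * β ^ k by rw [← pow_add, ← pow_add, hijk]]
  ring

theorem wedge_comp_eq_of_le_or_le (hf : Adapted n F f) (hg : Adapted n G g)
    (hh : Adapted n H h) (hijk : i + j + k = n) (hFGH : F i ⊔ G j ⊔ H k = ⊤)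
    (hEU : ∀ v ∈ F i, E v = (s * β) • v) (hEW : ∀ v ∈ G j ⊔ H k, E v = β • v) {a b c : ℕ}
    (habc : a + b + c = n) (hab : i ≤ a ∨ b ≤ j) :
    wedge n ω f (fun m => E (g m)) h a b c = β ^ b * wedge n ω f g h a b c := by
  have hcorr : ∀ m < b, 0 ≤ m → E (g m) - β • g m ∈ F a ⊔ G 0 ⊔ H c := by
    intro m hm _
    rcases hab with hia | hbj
    · refine mem_sup_left (mem_sup_left (hf.mono hia (by omega) ?_))
      exact LinearMap.apply_sub_smul_mem_of_sup_eq_top (by rwa [← sup_assoc]) hEU hEW _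
    · rw [hEW _ (mem_sup_left (hg.mem (hm.trans_le hbj) (by omega))), sub_self]
      exact zero_mem _
  simpa using wedge_eq_prod_mul_of_sub_mem (ω := ω) hf hg hh habc (Nat.zero_le b)
    (φ := fun _ => β) (by simp) (by simp) hcorr

theorem wedge_comp_eq_of_le_of_le (hf : Adapted n F f) (hg : Adapted n G g)
    (hh : Adapted n H h) (hFGH : F i ⊔ G j ⊔ H k = ⊤) (hβ : β ≠ 0)
    (hEU : ∀ v ∈ F i, E v = (s * β) • v) (hEW : ∀ v ∈ G j ⊔ H k, E v = β • v) {a b c : ℕ}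
    (habc : a + b + c = n) (hjb : j ≤ b) (hkc : k ≤ c) :
    wedge n ω f (fun m => E (g m)) h a b c = β ^ b * s ^ (b - j) * wedge n ω f g h a b c := by
  have hlow : ∀ m < j, E (g m) = (if m < j then β else s * β) • g m := fun m hm => by
    rw [if_pos hm, hEW _ (mem_sup_left (hg.mem hm (by omega)))]
  have hcorr : ∀ m < b, j ≤ m →
      E (g m) - (if m < j then β else s * β) • g m ∈ F a ⊔ G j ⊔ H c := by
    intro m _ hjm
    rw [if_neg hjm.not_gt, sup_assoc]
    refine mem_sup_right (sup_le_sup_left (hh.mono hkc (by omega)) _ ?_)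
    refine LinearMap.apply_sub_smul_mem_of_sup_eq_top ?_ hEW hEU _
    rwa [sup_comm, ← sup_assoc]
  rw [wedge_eq_prod_mul_of_sub_mem hf hg hh habc hjb hlow (fun m hm => by simp [hm, hβ]) hcorr]
  obtain ⟨d, rfl⟩ := Nat.exists_eq_add_of_le hjb
  rw [prod_range_add, prod_congr rfl fun m hm => if_pos (mem_range.1 hm),
    prod_congr rfl fun m _ => if_neg (by omega : ¬ j + m < j)]
  simp only [prod_const, card_range, Nat.add_sub_cancel_left]
  ring

theorem wedge_comp_eq_of_lt_of_lt [FiniteDimensional ℝ V] (hV : Module.finrank ℝ V = n)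
    (hω : ω ≠ 0) (hf : Adapted n F f) (hg : Adapted n G g) (hh : Adapted n H h)
    (hijk : i + j + k = n) (hFGH : F i ⊔ G j ⊔ H k = ⊤) (hs : s ≠ 0) (hβ : β ≠ 0)
    (hEU : ∀ v ∈ F i, E v = (s * β) • v) (hEW : ∀ v ∈ G j ⊔ H k, E v = β • v) {a b c : ℕ}
    (habc : a + b + c = n) (hai : a < i) (hck : c < k) :
    wedge n ω f (fun m => E (g m)) h a b c = β ^ b * s ^ (i - a) * wedge n ω f g h a b c := by
  have hdet := det_mul_wedge_eq (ω := ω) hV E habc (g' := fun m => E (g m))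
    (x := s * β) (y := 1) (z := β)
    (fun m hm => hEU _ (hf.mem (hm.trans hai) (by omega)))
    (fun m _ => (one_smul ℝ _).symm)
    (fun m hm => hEW _ (mem_sup_right (hh.mem (hm.trans hck) (by omega))))
  rw [det_eq_pow_mul_pow_of_eigen hV hω hf hg hh hijk hFGH hEU hEW] at hdet
  have hpow : s ^ i * β ^ n = (s * β) ^ a * β ^ c * (β ^ b * s ^ (i - a)) := by
    obtain ⟨d, rfl⟩ := Nat.exists_eq_add_of_le hai.le
    rw [Nat.add_sub_cancel_left, ← habc]
    ring
  refine mul_left_cancel₀ (mul_ne_zero (pow_ne_zero a (mul_ne_zero hs hβ)) (pow_ne_zero c hβ)) ?_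
  linear_combination hdet.symm + wedge n ω f g h a b c * hpow

theorem wedge_comp_eq_eruptionFactor_mul [FiniteDimensional ℝ V]
    (hV : Module.finrank ℝ V = n) (hω : ω ≠ 0) (hf : Adapted n F f) (hg : Adapted n G g)
    (hh : Adapted n H h) (hijk : i + j + k = n) (hFGH : F i ⊔ G j ⊔ H k = ⊤) (hs : s ≠ 0)
    (hβ : β ≠ 0) (hEU : ∀ v ∈ F i, E v = (s * β) • v) (hEW : ∀ v ∈ G j ⊔ H k, E v = β • v)
    {a b c : ℕ} (habc : a + b + c = n) :
    wedge n ω f (fun m => E (g m)) h a b c =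
      eruptionFactor i j s β a b * wedge n ω f g h a b c := by
  unfold eruptionFactor
  by_cases hab : i ≤ a ∨ b ≤ j
  · rw [wedge_comp_eq_of_le_or_le hf hg hh hijk hFGH hEU hEW habc hab,
      show min (i - a) (b - j) = 0 by omega, pow_zero, mul_one]
  push Not at hab
  rcases le_or_gt k c with hkc | hck
  · rw [wedge_comp_eq_of_le_of_le hf hg hh hFGH hβ hEU hEW habc hab.2.le hkc,
      show min (i - a) (b - j) = b - j by omega]
  · rw [wedge_comp_eq_of_lt_of_lt hV hω hf hg hh hijk hFGH hs hβ hEU hEW habc hab.1 hck,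
      show min (i - a) (b - j) = i - a by omega]

end Eruption

theorem tripleRatio_eq_mul_of_wedge_eq {n : ℕ} {V : Type*} [AddCommGroup V] [Module ℝ V]
    {ω : V [⋀^Fin n]→ₗ[ℝ] ℝ} {f g h f' g' h' : ℕ → V} (ρ : ℕ → ℕ → ℝ)
    (hρ : ∀ a b c, a + b + c = n → wedge n ω f' g' h' a b c = ρ a b * wedge n ω f g h a b c)
    {i j k : ℕ} (hi : 1 ≤ i) (hj : 1 ≤ j) (hk : 1 ≤ k) (hijk : i + j + k = n) :
    tripleRatio n ω f' g' h' i j k =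
      ρ (i + 1) j / ρ (i + 1) (j - 1) * (ρ (i - 1) (j + 1) / ρ i (j + 1)) *
        (ρ i (j - 1) / ρ (i - 1) j) * tripleRatio n ω f g h i j k := by
  rw [tripleRatio, tripleRatio, hρ (i + 1) j (k - 1) (by omega), hρ (i + 1) (j - 1) k (by omega),
    hρ (i - 1) (j + 1) k (by omega), hρ i (j + 1) (k - 1) (by omega),
    hρ i (j - 1) (k + 1) (by omega), hρ (i - 1) j (k + 1) (by omega), mul_div_mul_comm,
    mul_div_mul_comm, mul_div_mul_comm]
  ring

theorem eruptionFactor_ratio {s β : ℝ} (hs : s ≠ 0) (hβ : β ≠ 0) (i j : ℕ) {i' j' : ℕ}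
    (hi' : 1 ≤ i') :
    eruptionFactor i j s β (i' + 1) j' / eruptionFactor i j s β (i' + 1) (j' - 1) *
        (eruptionFactor i j s β (i' - 1) (j' + 1) / eruptionFactor i j s β i' (j' + 1)) *
        (eruptionFactor i j s β i' (j' - 1) / eruptionFactor i j s β (i' - 1) j') =
      s ^ if (i', j') = (i, j) then 1 else 0 := by
  have hμ : min (i - (i' + 1)) (j' - j) + min (i - (i' - 1)) (j' + 1 - j) +
      min (i - i') (j' - 1 - j) = (if (i', j') = (i, j) then 1 else 0) +
        (min (i - (i' + 1)) (j' - 1 - j) + min (i - i') (j' + 1 - j) +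
          min (i - (i' - 1)) (j' - j)) := by
    split_ifs with h <;> simp only [Prod.mk.injEq] at h <;> omega
  have hsμ := congrArg (s ^ ·) hμ
  simp only [pow_add] at hsμ
  unfold eruptionFactor
  rw [div_mul_div_comm, div_mul_div_comm, div_eq_iff (by simp [hs, hβ])]
  linear_combination β ^ j' * β ^ (j' + 1) * β ^ (j' - 1) * hsμ

theorem statement3_general (n : ℕ) (V : Type*) [NormedAddCommGroup V] [NormedSpace ℝ V]
    [FiniteDimensional ℝ V] (hV : Module.finrank ℝ V = n)
    (F G H : ℕ → Submodule ℝ V) (hG : IsFlag n G)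
    (hFGH : TransverseTriple n F G H)
    (ω : AlternatingMap ℝ V ℝ (Fin n)) (hω : ω ≠ 0)
    (f g h : ℕ → V) (hf : Adapted n F f) (hg : Adapted n G g) (hh : Adapted n H h)
    (i j k : ℕ) (hi : 1 ≤ i) (hijk : i + j + k = n)
    (A : Module.End ℝ V) (hA : IsEruption n i j k F G H A) (t : ℝ) :
    IsFlag n (fun m => Submodule.map (expEnd (t • A)) (G m)) ∧
    Adapted n (fun m => Submodule.map (expEnd (t • A)) (G m)) (fun l => expEnd (t • A) (g l)) ∧
    ∀ i' j' k' : ℕ, 1 ≤ i' → 1 ≤ j' → 1 ≤ k' → i' + j' + k' = n →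
      (wedge n ω f (fun l => expEnd (t • A) (g l)) h (i' + 1) j' (k' - 1) ≠ 0 ∧
       wedge n ω f (fun l => expEnd (t • A) (g l)) h (i' + 1) (j' - 1) k' ≠ 0 ∧
       wedge n ω f (fun l => expEnd (t • A) (g l)) h (i' - 1) (j' + 1) k' ≠ 0 ∧
       wedge n ω f (fun l => expEnd (t • A) (g l)) h i' (j' + 1) (k' - 1) ≠ 0 ∧
       wedge n ω f (fun l => expEnd (t • A) (g l)) h i' (j' - 1) (k' + 1) ≠ 0 ∧
       wedge n ω f (fun l => expEnd (t • A) (g l)) h (i' - 1) j' (k' + 1) ≠ 0) ∧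
      ((i', j', k') ≠ (i, j, k) →
        tripleRatio n ω f (fun l => expEnd (t • A) (g l)) h i' j' k' = tripleRatio n ω f g h i' j' k') ∧
      ((i', j', k') = (i, j, k) →
        tripleRatio n ω f (fun l => expEnd (t • A) (g l)) h i' j' k' = Real.exp t * tripleRatio n ω f g h i' j' k') := by
  set E := expEnd (t • A)
  set β := Real.exp (t * (-i / n))
  have hEU : ∀ v ∈ F i, E v = (Real.exp t * β) • v := fun v hv => by
    rw [expEnd_apply_of_apply_eq_smul (c := t * ((n - i) / n))
      (by rw [LinearMap.smul_apply, hA.1 v hv, smul_smul]), ← Real.exp_add]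
    congr 2
    field_simp [show (n : ℝ) ≠ 0 by norm_cast; omega]
    ring
  have hEW : ∀ v ∈ G j ⊔ H k, E v = β • v := fun v hv =>
    expEnd_apply_of_apply_eq_smul (by rw [LinearMap.smul_apply, hA.2 v hv, smul_smul])
  have hwedge : ∀ a b c, a + b + c = n → wedge n ω f (fun l => E (g l)) h a b c =
      eruptionFactor i j (Real.exp t) β a b * wedge n ω f g h a b c := fun a b c habc =>
    wedge_comp_eq_eruptionFactor_mul hV hω hf hg hh hijk (hFGH i j k hijk) (Real.exp_ne_zero t)
      (Real.exp_ne_zero _) hEU hEW habc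
  have hne : ∀ a b c, a + b + c = n → wedge n ω f (fun l => E (g l)) h a b c ≠ 0 :=
    fun a b c habc => by
      rw [hwedge a b c habc]
      exact mul_ne_zero (by simp [eruptionFactor, β, Real.exp_ne_zero])
        (wedge_ne_zero hV hω hf hg hh habc (hFGH a b c habc))
  refine ⟨hG.map (expEnd_injective _), hg.map E, fun i' j' k' hi' hj' hk' hsum =>
    ⟨⟨hne _ _ _ (by omega), hne _ _ _ (by omega), hne _ _ _ (by omega), hne _ _ _ (by omega),
      hne _ _ _ (by omega), hne _ _ _ (by omega)⟩, fun hneq => ?_, fun heq => ?_⟩⟩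
  all_goals rw [tripleRatio_eq_mul_of_wedge_eq _ hwedge hi' hj' hk' hsum,
    eruptionFactor_ratio (Real.exp_ne_zero t) (Real.exp_ne_zero _) i j hi']
  · rw [if_neg (fun h' => hneq (by simp only [Prod.mk.injEq] at h' ⊢; omega)), pow_zero, one_mul]
  · rw [if_pos (by simp only [Prod.mk.injEq] at heq ⊢; omega), pow_one]

theorem statement3 (n : ℕ) (V : Type*) [NormedAddCommGroup V] [NormedSpace ℝ V]
    [FiniteDimensional ℝ V] (hV : Module.finrank ℝ V = n)
    (F G H : ℕ → Submodule ℝ V) (hF : IsFlag n F) (hG : IsFlag n G) (hH : IsFlag n H)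
    (hFGH : TransverseTriple n F G H)
    (ω : AlternatingMap ℝ V ℝ (Fin n)) (hω : ω ≠ 0)
    (f g h : ℕ → V) (hf : Adapted n F f) (hg : Adapted n G g) (hh : Adapted n H h)
    (i j k : ℕ) (hi : 1 ≤ i) (hj : 1 ≤ j) (hk : 1 ≤ k) (hijk : i + j + k = n)
    (A : Module.End ℝ V) (hA : IsEruption n i j k F G H A) (t : ℝ) :
    IsFlag n (fun m => Submodule.map (expEnd (t • A)) (G m)) ∧
    Adapted n (fun m => Submodule.map (expEnd (t • A)) (G m)) (fun l => expEnd (t • A) (g l)) ∧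
    ∀ i' j' k' : ℕ, 1 ≤ i' → 1 ≤ j' → 1 ≤ k' → i' + j' + k' = n →
      (wedge n ω f (fun l => expEnd (t • A) (g l)) h (i' + 1) j' (k' - 1) ≠ 0 ∧
       wedge n ω f (fun l => expEnd (t • A) (g l)) h (i' + 1) (j' - 1) k' ≠ 0 ∧
       wedge n ω f (fun l => expEnd (t • A) (g l)) h (i' - 1) (j' + 1) k' ≠ 0 ∧
       wedge n ω f (fun l => expEnd (t • A) (g l)) h i' (j' + 1) (k' - 1) ≠ 0 ∧
       wedge n ω f (fun l => expEnd (t • A) (g l)) h i' (j' - 1) (k' + 1) ≠ 0 ∧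
       wedge n ω f (fun l => expEnd (t • A) (g l)) h (i' - 1) j' (k' + 1) ≠ 0) ∧
      ((i', j', k') ≠ (i, j, k) →
        tripleRatio n ω f (fun l => expEnd (t • A) (g l)) h i' j' k' = tripleRatio n ω f g h i' j' k') ∧
      ((i', j', k') = (i, j, k) →
        tripleRatio n ω f (fun l => expEnd (t • A) (g l)) h i' j' k' = Real.exp t * tripleRatio n ω f g h i' j' k') :=
  statement3_general n V hV F G H hG hFGH ω hω f g h hf hg hh i j k hi hijk A hA t
end

section
/- Let V be an n-dimensional real vector space, let (F,G,H) be a transverse triple of complete flags in V, and let i,j,k,i',j',k' ∈ {0,…,n−1} be integers with i+j+k = n = i'+j'+k'. Then tr(A^{i,j,k}_{F,G,H} ∘ A^{i',j',k'}_{F,G,H}) = min(i,i') − (i·i')/n. In particular this trace does not depend on F, G, H. -/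
/-!
Writing `a = i/n`, the eruption endomorphism is `A = P - a • 1`, where `P` is the projection onto
`F i` along `G j + H k`, a projection of trace `i`. For `i' ≤ i` the flag gives `F i' ≤ F i`,
so `P ∘ Q = Q` for the two projections, and expanding `(P - a)(Q - b)` leaves only traces of
projections and of the identity.
-/

open LinearMap Module

theorem IsFlag.monotoneOn {n : ℕ} {V : Type*} [AddCommGroup V] [Module ℝ V]
    {F : ℕ → Submodule ℝ V} (hF : IsFlag n F) : MonotoneOn F (Set.Iic n) :=
  monotoneOn_of_le_succ Set.ordConnected_Iic fun _ _ _ hsucc ↦ hF.1 _ hsucc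

theorem LinearMap.isProj_add_smul_one {R M : Type*} [CommRing R] [AddCommGroup M] [Module R M]
    {U W : Submodule R M} (hUW : U ⊔ W = ⊤) {A : Module.End R M} {a : R}
    (hU : ∀ v ∈ U, A v = (1 - a) • v) (hW : ∀ v ∈ W, A v = -a • v) :
    IsProj U (A + a • 1) := by
  have hfix : ∀ v ∈ U, (A + a • 1) v = v := fun v hv ↦ by
    simp [hU v hv, sub_smul]
  have hker : ∀ v ∈ W, (A + a • 1) v = 0 := fun v hv ↦ by
    simp [hW v hv]
  refine ⟨fun v ↦ ?_, hfix⟩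
  obtain ⟨u, hu, w, hw, rfl⟩ := Submodule.mem_sup.mp (hUW ▸ Submodule.mem_top : v ∈ U ⊔ W)
  rw [map_add, hfix u hu, hker w hw, add_zero]
  exact hu

theorem LinearMap.trace_comp_of_isProj_add_smul_one {K V : Type*} [Field K] [AddCommGroup V]
    [Module K V] [FiniteDimensional K V] {U W : Submodule K V} {A B : Module.End K V} {a b : K}
    (hA : IsProj U (A + a • 1)) (hB : IsProj W (B + b • 1)) (hWU : W ≤ U) :
    trace K V (A ∘ₗ B) =
      (1 - a) * finrank K W - b * finrank K U + a * b * finrank K V := by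
  set P := A + a • 1
  set Q := B + b • 1
  have hPQ : P ∘ₗ Q = Q :=
    (hA.isIdempotentElem.comp_eq_right_iff Q).mpr (by rw [hA.range, hB.range]; exact hWU)
  have hAB : A ∘ₗ B = P ∘ₗ Q - b • P - a • Q + (a * b) • 1 := by
    simp only [P, Q, add_comp, comp_add, smul_comp, comp_smul, End.one_eq_id, id_comp,
      comp_id]
    module
  rw [hAB, hPQ]
  simp only [map_add, map_sub, map_smul, hA.trace, hB.trace, trace_one, smul_eq_mul]
  ring

theorem IsEruption.isProj {n i j k : ℕ} {V : Type*} [AddCommGroup V] [Module ℝ V]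
    {F G H : ℕ → Submodule ℝ V} {A : Module.End ℝ V} (hA : IsEruption n i j k F G H A)
    (hFGH : TransverseTriple n F G H) (hn : n ≠ 0) (hijk : i + j + k = n) :
    IsProj (F i) (A + ((i : ℝ) / n) • 1) := by
  refine isProj_add_smul_one (by rw [← sup_assoc]; exact hFGH i j k hijk) (fun v hv ↦ ?_)
    (fun v hv ↦ by rw [hA.2 v hv, neg_div])
  rw [hA.1 v hv, sub_div, div_self (Nat.cast_ne_zero.mpr hn)]

theorem IsEruption.trace_comp_of_le {n : ℕ} {V : Type*} [AddCommGroup V] [Module ℝ V]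
    [FiniteDimensional ℝ V] (hV : finrank ℝ V = n) {F G H : ℕ → Submodule ℝ V}
    (hF : IsFlag n F) (hFGH : TransverseTriple n F G H) {i j k i' j' k' : ℕ}
    (hi : i < n) (hi'i : i' ≤ i) (hijk : i + j + k = n) (hijk' : i' + j' + k' = n)
    {A B : Module.End ℝ V} (hA : IsEruption n i j k F G H A)
    (hB : IsEruption n i' j' k' F G H B) :
    trace ℝ V (A ∘ₗ B) = i' - i * i' / n := by
  have hn : n ≠ 0 := by omega
  have hFi'i : F i' ≤ F i :=
    hF.monotoneOn (Set.mem_Iic.mpr (by omega)) (Set.mem_Iic.mpr hi.le) hi'i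
  rw [trace_comp_of_isProj_add_smul_one (hA.isProj hFGH hn hijk) (hB.isProj hFGH hn hijk') hFi'i,
    hF.2 i hi.le, hF.2 i' (by omega), hV]
  field_simp
  ring

theorem statement8_general (n : ℕ) (V : Type*) [AddCommGroup V] [Module ℝ V] [FiniteDimensional ℝ V]
    (hV : Module.finrank ℝ V = n)
    (F G H : ℕ → Submodule ℝ V) (hF : IsFlag n F)
    (hFGH : TransverseTriple n F G H)
    (i j k i' j' k' : ℕ) (hi : i < n) (hi' : i' < n)
    (hijk : i + j + k = n) (hijk' : i' + j' + k' = n)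
    (A B : Module.End ℝ V)
    (hA : IsEruption n i j k F G H A) (hB : IsEruption n i' j' k' F G H B) :
    LinearMap.trace ℝ V (A ∘ₗ B) =
      min (i : ℝ) (i' : ℝ) - (i : ℝ) * (i' : ℝ) / (n : ℝ) := by
  rcases le_total i' i with h | h
  · rw [min_eq_right (by exact_mod_cast h)]
    exact hA.trace_comp_of_le hV hF hFGH hi h hijk hijk' hB
  · rw [min_eq_left (by exact_mod_cast h), trace_comp_comm', mul_comm (i : ℝ)]
    exact hB.trace_comp_of_le hV hF hFGH hi' h hijk' hijk hA

theorem statement8 (n : ℕ) (V : Type*) [AddCommGroup V] [Module ℝ V] [FiniteDimensional ℝ V]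
    (hV : Module.finrank ℝ V = n)
    (F G H : ℕ → Submodule ℝ V) (hF : IsFlag n F) (hG : IsFlag n G) (hH : IsFlag n H)
    (hFGH : TransverseTriple n F G H)
    (i j k i' j' k' : ℕ) (hi : i < n) (hj : j < n) (hk : k < n)
    (hi' : i' < n) (hj' : j' < n) (hk' : k' < n)
    (hijk : i + j + k = n) (hijk' : i' + j' + k' = n)
    (A B : Module.End ℝ V)
    (hA : IsEruption n i j k F G H A) (hB : IsEruption n i' j' k' F G H B) :
    LinearMap.trace ℝ V (A ∘ₗ B) =
      min (i : ℝ) (i' : ℝ) - (i : ℝ) * (i' : ℝ) / (n : ℝ) :=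
  statement8_general n V hV F G H hF hFGH i j k i' j' k' hi hi' hijk hijk' A B hA hB
end

section
/- Let V be an n-dimensional real vector space, let (F,G,H) be a transverse triple of complete flags in V, and let i,j,k,i',j',k' ∈ {0,…,n−1} be integers with i+j+k = n = i'+j'+k'. Let P be the projection of V onto F^(i) along G^(j) + H^(k) (the unique endomorphism equal to the identity on F^(i) and zero on G^(j) + H^(k)), and let Q be the projection of V onto G^(j') along H^(k') + F^(i'). Then tr(P ∘ Q) = max(0, min(i−i', j'−j)). -/
namespace LinearMap

section Ring

variable {R M : Type*} [Ring R] [AddCommGroup M] [Module R M]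

theorem isProj_of_sup_eq_top {A B : Submodule R M} (hAB : A ⊔ B = ⊤) {f : M →ₗ[R] M}
    (hA : ∀ v ∈ A, f v = v) (hB : ∀ v ∈ B, f v = 0) : IsProj A f := by
  refine ⟨fun v => ?_, hA⟩
  obtain ⟨a, ha, b, hb, rfl⟩ := Submodule.mem_sup.mp (hAB ▸ Submodule.mem_top : v ∈ A ⊔ B)
  rwa [map_add, hA a ha, hB b hb, add_zero]

theorem IsProj.comp_eq_zero {m : Submodule R M} {f g : M →ₗ[R] M} (hf : IsProj m f)
    (hg : ∀ v ∈ m, g v = 0) : g ∘ₗ f = 0 :=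
  range_le_ker_iff.mp (hf.range ▸ hg)

end Ring

variable {K V : Type*} [Field K] [AddCommGroup V] [Module K V] [FiniteDimensional K V]

theorem trace_comp_eq_finrank_sub {X Y Z Y' Z' : Submodule K V} (hXYZ : X ⊔ Y ⊔ Z = ⊤)
    {P Q : V →ₗ[K] V} (hPX : ∀ v ∈ X, P v = v) (hPYZ : ∀ v ∈ Y ⊔ Z, P v = 0)
    (hQ : IsProj Y' Q) (hQZ' : ∀ v ∈ Z', Q v = 0) (hY : Y ≤ Y') (hZ : Z ≤ Z') :
    trace K V (P ∘ₗ Q) = (Module.finrank K Y' : K) - Module.finrank K Y := by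
  have hQ_id_sub_P : IsProj Y (Q ∘ₗ (id - P)) := by
    refine isProj_of_sup_eq_top (B := X ⊔ Z) (by rwa [← sup_assoc, sup_comm Y]) ?_ ?_
    · intro v hv
      simp [hPYZ v (Submodule.mem_sup_left hv), hQ.map_id v (hY hv)]
    · intro v hv
      obtain ⟨x, hx, z, hz, rfl⟩ := Submodule.mem_sup.mp hv
      simp [hPX x hx, hPYZ z (Submodule.mem_sup_right hz), hQZ' z (hZ hz)]
  have htrace := hQ_id_sub_P.trace
  rw [comp_sub, comp_id, map_sub, hQ.trace, trace_comp_comm'] at htrace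
  linear_combination -htrace

end LinearMap

open LinearMap in
theorem statement9_general (n : ℕ) (V : Type*) [AddCommGroup V] [Module ℝ V] [FiniteDimensional ℝ V]
    (F G H : ℕ → Submodule ℝ V) (hF : IsFlag n F) (hG : IsFlag n G) (hH : IsFlag n H)
    (hFGH : TransverseTriple n F G H)
    (i j k i' j' k' : ℕ)
    (hijk : i + j + k = n) (hijk' : i' + j' + k' = n)
    (P Q : Module.End ℝ V)
    (hP : (∀ v ∈ F i, P v = v) ∧ ∀ v ∈ G j ⊔ H k, P v = 0)
    (hQ : (∀ v ∈ G j', Q v = v) ∧ ∀ v ∈ H k' ⊔ F i', Q v = 0) :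
    LinearMap.trace ℝ V (P ∘ₗ Q) =
      ((max 0 (min ((i : ℤ) - (i' : ℤ)) ((j' : ℤ) - (j : ℤ))) : ℤ) : ℝ) := by
  obtain ⟨hPF, hPGH⟩ := hP
  obtain ⟨hQG, hQHF⟩ := hQ
  have hP_proj : IsProj (F i) P :=
    isProj_of_sup_eq_top (by rw [← sup_assoc]; exact hFGH i j k hijk) hPF hPGH
  have hQ_proj : IsProj (G j') Q :=
    isProj_of_sup_eq_top (by rw [← hFGH i' j' k' hijk']; ac_rfl) hQG hQHF
  rcases le_or_gt j' j with hjj | hjj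
  · rw [hQ_proj.comp_eq_zero fun v hv ↦
      hPGH v (Submodule.mem_sup_left (hG.mono hjj (by omega) hv)),
      map_zero, show max 0 (min ((i : ℤ) - i') ((j' : ℤ) - j)) = 0 by omega, Int.cast_zero]
  rcases le_or_gt i i' with hii | hii
  · rw [trace_comp_comm', hP_proj.comp_eq_zero fun v hv ↦
      hQHF v (Submodule.mem_sup_right (hF.mono hii (by omega) hv)),
      map_zero, show max 0 (min ((i : ℤ) - i') ((j' : ℤ) - j)) = 0 by omega, Int.cast_zero]
  rcases le_or_gt k k' with hkk | hkk
  · rw [trace_comp_eq_finrank_sub (hFGH i j k hijk) hPF hPGH hQ_proj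
      (fun v hv ↦ hQHF v (Submodule.mem_sup_left hv)) (hG.mono hjj.le (by omega))
      (hH.mono hkk (by omega)), hG.2 j' (by omega), hG.2 j (by omega),
      show max 0 (min ((i : ℤ) - i') ((j' : ℤ) - j)) = j' - j by omega]
    push_cast; ring
  · rw [trace_comp_comm', trace_comp_eq_finrank_sub (Y := F i') (Z := H k')
      (by rw [← hFGH i' j' k' hijk', sup_comm (F i')])
      hQG (by rwa [sup_comm]) hP_proj (fun v hv ↦ hPGH v (Submodule.mem_sup_right hv))
      (hF.mono hii.le (by omega)) (hH.mono hkk.le (by omega)), hF.2 i (by omega),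
      hF.2 i' (by omega), show max 0 (min ((i : ℤ) - i') ((j' : ℤ) - j)) = i - i' by omega]
    push_cast; ring

theorem statement9 (n : ℕ) (V : Type*) [AddCommGroup V] [Module ℝ V] [FiniteDimensional ℝ V]
    (hV : Module.finrank ℝ V = n)
    (F G H : ℕ → Submodule ℝ V) (hF : IsFlag n F) (hG : IsFlag n G) (hH : IsFlag n H)
    (hFGH : TransverseTriple n F G H)
    (i j k i' j' k' : ℕ) (hi : i < n) (hj : j < n) (hk : k < n)
    (hi' : i' < n) (hj' : j' < n) (hk' : k' < n)
    (hijk : i + j + k = n) (hijk' : i' + j' + k' = n)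
    (P Q : Module.End ℝ V)
    (hP : (∀ v ∈ F i, P v = v) ∧ ∀ v ∈ G j ⊔ H k, P v = 0)
    (hQ : (∀ v ∈ G j', Q v = v) ∧ ∀ v ∈ H k' ⊔ F i', Q v = 0) :
    LinearMap.trace ℝ V (P ∘ₗ Q) =
      ((max 0 (min ((i : ℤ) - (i' : ℤ)) ((j' : ℤ) - (j : ℤ))) : ℤ) : ℝ) :=
  statement9_general n V F G H hF hG hH hFGH i j k i' j' k' hijk hijk' P Q hP hQ
end

section
/- Let V be an n-dimensional real vector space and let (F,G,H) be a transverse triple of complete flags in V. Let (f_l), (g_l), (h_l) and (f'_l), (g'_l), (h'_l) be two choices of bases of V adapted to F, G, H respectively, and let ω and ω' be two nonzero alternating n-forms on V. Then for all integers i,j,k ≥ 1 with i+j+k = n, the triple ratio T_{i,j,k}(F,G,H) computed using (f_l), (g_l), (h_l) and ω equals the triple ratio computed using (f'_l), (g'_l), (h'_l) and ω'; that is, the triple ratio depends only on the flags F, G, H. -/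
open Function Submodule

namespace AlternatingMap

variable {K V : Type*} [AddCommGroup V]

theorem map_update_eq_zero_of_mem_span_s12 [CommRing K] [Module K V] {ι : Type*} [DecidableEq ι]
    (ω : AlternatingMap K V K ι) (v : ι → V) (i : ι)
    {x : V} (hx : x ∈ span K (v '' {i}ᶜ)) : ω (update v i x) = 0 := by
  induction hx using Submodule.span_induction with
  | mem x hx =>
    obtain ⟨j, hji, rfl⟩ := hx
    exact ω.map_eq_zero_of_eq _ (by simp [update_of_ne hji]) (Ne.symm hji)
  | zero => exact ω.map_update_zero v i
  | add x y _ _ hx hy => rw [ω.map_update_add, hx, hy, add_zero]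
  | smul _ x _ hx => rw [ω.map_update_smul, hx, smul_zero]

theorem exists_ne_zero_eq_smul [Field K] [Module K V] [FiniteDimensional K V]
    {n : ℕ} (hV : Module.finrank K V = n) {ω ω' : AlternatingMap K V K (Fin n)}
    (hω : ω ≠ 0) (hω' : ω' ≠ 0) : ∃ c ≠ (0 : K), ω' = c • ω := by
  let e := Module.finBasisOfFinrankEq K V hV
  have he : ω e ≠ 0 := (ω.map_basis_ne_zero_iff e).mpr hω
  have he' : ω' e ≠ 0 := (ω'.map_basis_ne_zero_iff e).mpr hω'
  refine ⟨ω' e / ω e, div_ne_zero he' he, ?_⟩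
  calc ω' = ω' e • e.det := ω'.eq_smul_basis_det e
    _ = (ω' e / ω e) • ω e • e.det := by rw [smul_smul, div_mul_cancel₀ _ he]
    _ = (ω' e / ω e) • ω := by rw [← ω.eq_smul_basis_det e]

end AlternatingMap

section ReplaceBlock

variable {V : Type*} {n : ℕ}

def replaceBlock (s a : ℕ) (u : ℕ → V) (v : Fin n → V) : Fin n → V :=
  fun l => if s ≤ l ∧ (l : ℕ) < s + a then u (l - s) else v l

@[simp]
theorem replaceBlock_zero (s : ℕ) (u : ℕ → V) (v : Fin n → V) : replaceBlock s 0 u v = v := by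
  funext l
  simp only [replaceBlock, add_zero, ite_eq_right_iff, and_imp]
  omega

theorem replaceBlock_succ (s a : ℕ) (u : ℕ → V) (v : Fin n → V) (h : s + a < n) :
    replaceBlock s (a + 1) u v = update (replaceBlock s a u v) ⟨s + a, h⟩ (u a) := by
  funext l
  rcases eq_or_ne l ⟨s + a, h⟩ with rfl | hl
  · simp [replaceBlock]
  · have : (l : ℕ) ≠ s + a := fun h' => hl (Fin.ext h')
    simp only [replaceBlock, update_of_ne hl]
    split_ifs <;> first | rfl | omega

theorem update_replaceBlock (s a : ℕ) (u : ℕ → V) (v : Fin n → V) (h : s + a < n) (x : V) :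
    update (replaceBlock s a u v) ⟨s + a, h⟩ x = replaceBlock s a u (update v ⟨s + a, h⟩ x) := by
  funext l
  rcases eq_or_ne l ⟨s + a, h⟩ with rfl | hl
  · simp [replaceBlock]
  · simp only [replaceBlock, update_of_ne hl]

theorem image_Iio_subset_replaceBlock (s a : ℕ) (u : ℕ → V) (v : Fin n → V) (h : s + a < n) :
    u '' Set.Iio a ⊆ replaceBlock s a u v '' {⟨s + a, h⟩}ᶜ := by
  rintro _ ⟨m, hm, rfl⟩
  have hm : m < a := hm
  exact ⟨⟨s + m, by omega⟩, by simp [Fin.ext_iff]; omega, by simp [replaceBlock, hm]⟩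

variable {K : Type*} [CommRing K] [AddCommGroup V] [Module K V]

theorem span_image_Iio_succ (u : ℕ → V) (m : ℕ) :
    span K (u '' Set.Iio (m + 1)) = K ∙ u m ⊔ span K (u '' Set.Iio m) := by
  rw [Set.Iio_add_one_eq_Iic, ← Set.Iio_insert, Set.image_insert_eq, span_insert]

theorem mem_span_image_Iio_succ (u : ℕ → V) (m : ℕ) : u m ∈ span K (u '' Set.Iio (m + 1)) :=
  subset_span ⟨m, Set.mem_Iio.mpr m.lt_succ_self, rfl⟩

theorem span_image_Iio_succ_eq {u : ℕ → V} {m : ℕ} (hm : u m ∈ span K (u '' Set.Iio m)) :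
    span K (u '' Set.Iio (m + 1)) = span K (u '' Set.Iio m) := by
  rw [span_image_Iio_succ, sup_eq_right, span_singleton_le_iff_mem]
  exact hm

theorem map_update_replaceBlock_eq_zero (ω : AlternatingMap K V K (Fin n)) (s a : ℕ)
    (u : ℕ → V) (v : Fin n → V) (h : s + a < n) {x : V} (hx : x ∈ span K (u '' Set.Iio a)) :
    ω (update (replaceBlock s a u v) ⟨s + a, h⟩ x) = 0 :=
  ω.map_update_eq_zero_of_mem_span_s12 _ _ <| span_mono (image_Iio_subset_replaceBlock s a u v h) hx

def IsBlockScaling (n : ℕ) (u u' : ℕ → V) (d : ℕ → K) : Prop :=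
  ∀ a s, s + a ≤ n → ∀ (ω : AlternatingMap K V K (Fin n)) (v : Fin n → V),
    ω (replaceBlock s a u' v) = d a * ω (replaceBlock s a u v)

end ReplaceBlock

section BlockScaling

variable {K V : Type*} [CommRing K] [AddCommGroup V] [Module K V] {n : ℕ}

theorem map_replaceBlock_succ_eq_mul {u u' : ℕ → V} {a s : ℕ} {c d : K} {w : V} (h : s + a < n)
    (hd : ∀ (ω : AlternatingMap K V K (Fin n)) v,
      ω (replaceBlock s a u' v) = d * ω (replaceBlock s a u v))
    (hw : w ∈ span K (u' '' Set.Iio a)) (hu' : c • u a + w = u' a)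
    (ω : AlternatingMap K V K (Fin n)) (v : Fin n → V) :
    ω (replaceBlock s (a + 1) u' v) = c * d * ω (replaceBlock s (a + 1) u v) := by
  rw [replaceBlock_succ _ _ _ _ h, replaceBlock_succ _ _ _ _ h, ← hu', ω.map_update_add,
    map_update_replaceBlock_eq_zero ω s a u' v h hw, add_zero, ω.map_update_smul,
    update_replaceBlock, hd, ← update_replaceBlock, smul_eq_mul, mul_assoc]

theorem exists_isBlockScaling [IsDomain K] {u u' : ℕ → V}
    (hspan : ∀ m ≤ n, span K (u '' Set.Iio m) = span K (u' '' Set.Iio m)) :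
    ∃ d : ℕ → K, (∀ a, d a ≠ 0) ∧ IsBlockScaling n u u' d := by
  suffices ∀ a, ∃ d ≠ (0 : K), ∀ s, s + a ≤ n → ∀ (ω : AlternatingMap K V K (Fin n)) v,
      ω (replaceBlock s a u' v) = d * ω (replaceBlock s a u v) by
    choose d hd0 hd using this
    exact ⟨d, hd0, hd⟩
  intro a
  induction a with
  | zero => exact ⟨1, one_ne_zero, fun s _ ω v => by simp⟩
  | succ a ih =>
    obtain ⟨d, hd0, hd⟩ := ih
    by_cases ha : a + 1 ≤ n
    swap
    · exact ⟨1, one_ne_zero, fun s hs => absurd hs (by omega)⟩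
    have hspan_a := hspan a (by omega)
    have hmem : u' a ∈ K ∙ u a ⊔ span K (u '' Set.Iio a) := by
      rw [← span_image_Iio_succ, hspan (a + 1) ha]
      exact mem_span_image_Iio_succ u' a
    obtain ⟨_, hc, w, hw, hu'⟩ := mem_sup.mp hmem
    obtain ⟨c, rfl⟩ := mem_span_singleton.mp hc
    have step := fun s (hs : s + a < n) =>
      map_replaceBlock_succ_eq_mul hs (hd s hs.le) (hspan_a ▸ hw) hu'
    by_cases hc0 : c = 0
    · -- then `u' a`, hence also `u a`, lies in the span of its predecessors: both sides vanish
      rw [hc0, zero_smul, zero_add] at hu'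
      have hu_a : u a ∈ span K (u '' Set.Iio a) := by
        rw [hspan_a, ← span_image_Iio_succ_eq (hu' ▸ hspan_a ▸ hw), ← hspan (a + 1) ha]
        exact mem_span_image_Iio_succ u a
      refine ⟨1, one_ne_zero, fun s hs ω v => ?_⟩
      rw [step s hs, hc0, replaceBlock_succ _ _ _ _ hs,
        map_update_replaceBlock_eq_zero ω s a u v hs hu_a]
      ring
    · exact ⟨c * d, mul_ne_zero hc0 hd0, step⟩

end BlockScaling

section Wedge

variable {V : Type*} {n : ℕ}

def wedgeArgs (n : ℕ) (f g h : ℕ → V) (a b : ℕ) : Fin n → V :=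
  fun l => if (l : ℕ) < a then f l else if (l : ℕ) < a + b then g (l - a) else h (l - a - b)

theorem replaceBlock_wedgeArgs_fst (f g h f' : ℕ → V) (a b : ℕ) :
    replaceBlock 0 a f' (wedgeArgs n f g h a b) = wedgeArgs n f' g h a b := by
  funext l
  simp only [replaceBlock, wedgeArgs]
  split_ifs <;> first | rfl | omega

theorem replaceBlock_wedgeArgs_snd (f g h g' : ℕ → V) (a b : ℕ) :
    replaceBlock a b g' (wedgeArgs n f g h a b) = wedgeArgs n f g' h a b := by
  funext l
  simp only [replaceBlock, wedgeArgs]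
  split_ifs <;> first | rfl | omega

theorem replaceBlock_wedgeArgs_thd (f g h h' : ℕ → V) {a b c : ℕ} (habc : a + b + c = n) :
    replaceBlock (a + b) c h' (wedgeArgs n f g h a b) = wedgeArgs n f g h' a b := by
  funext l
  have := l.isLt
  simp only [replaceBlock, wedgeArgs]
  split_ifs <;> first | rfl | omega | (congr 1; omega)

variable [AddCommGroup V] [Module ℝ V]

theorem wedge_eq_apply_wedgeArgs (ω : AlternatingMap ℝ V ℝ (Fin n)) (f g h : ℕ → V)
    (a b c : ℕ) : wedge n ω f g h a b c = ω (wedgeArgs n f g h a b) :=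
  rfl

theorem wedge_smul (ω : AlternatingMap ℝ V ℝ (Fin n)) (t : ℝ) (f g h : ℕ → V) (a b c : ℕ) :
    wedge n (t • ω) f g h a b c = t * wedge n ω f g h a b c :=
  rfl

theorem wedge_eq_mul_of_isBlockScaling (ω : AlternatingMap ℝ V ℝ (Fin n))
    {f g h f' g' h' : ℕ → V} {dF dG dH : ℕ → ℝ} (hF : IsBlockScaling n f f' dF)
    (hG : IsBlockScaling n g g' dG) (hH : IsBlockScaling n h h' dH) {a b c : ℕ}
    (habc : a + b + c = n) :
    wedge n ω f' g' h' a b c = dF a * dG b * dH c * wedge n ω f g h a b c := by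
  have hF' : wedge n ω f' g' h' a b c = dF a * wedge n ω f g' h' a b c := by
    simpa only [wedge_eq_apply_wedgeArgs, replaceBlock_wedgeArgs_fst]
      using hF a 0 (by omega) ω (wedgeArgs n f g' h' a b)
  have hG' : wedge n ω f g' h' a b c = dG b * wedge n ω f g h' a b c := by
    simpa only [wedge_eq_apply_wedgeArgs, replaceBlock_wedgeArgs_snd]
      using hG b a (by omega) ω (wedgeArgs n f g h' a b)
  have hH' : wedge n ω f g h' a b c = dH c * wedge n ω f g h a b c := by
    simpa only [wedge_eq_apply_wedgeArgs, replaceBlock_wedgeArgs_thd _ _ _ _ habc]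
      using hH c (a + b) habc.le ω (wedgeArgs n f g h a b)
  rw [hF', hG', hH', mul_assoc, mul_assoc]

end Wedge

theorem tripleRatio_eq_of_wedge_eq_mul {V : Type*} [AddCommGroup V] [Module ℝ V] {n : ℕ}
    {ω ω' : AlternatingMap ℝ V ℝ (Fin n)} {f g h f' g' h' : ℕ → V} {p q r : ℕ → ℝ}
    (hp : ∀ a, p a ≠ 0) (hq : ∀ b, q b ≠ 0) (hr : ∀ c, r c ≠ 0)
    (hw : ∀ a b c, a + b + c = n →
      wedge n ω' f' g' h' a b c = p a * q b * r c * wedge n ω f g h a b c)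
    {i j k : ℕ} (hi : 1 ≤ i) (hj : 1 ≤ j) (hk : 1 ≤ k) (hijk : i + j + k = n) :
    tripleRatio n ω' f' g' h' i j k = tripleRatio n ω f g h i j k := by
  -- no wedge needs to be nonzero: `(x * w)⁻¹ = x⁻¹ * w⁻¹` holds also for `w = 0`
  have hscale : p (i + 1) * q j * r (k - 1) / (p (i + 1) * q (j - 1) * r k) *
      (p (i - 1) * q (j + 1) * r k / (p i * q (j + 1) * r (k - 1))) *
      (p i * q (j - 1) * r (k + 1) / (p (i - 1) * q j * r (k + 1))) = 1 := by
    field_simp [hp, hq, hr]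
  rw [← mul_one (tripleRatio n ω f g h i j k), ← hscale, tripleRatio, tripleRatio,
    hw (i + 1) j (k - 1) (by omega), hw (i + 1) (j - 1) k (by omega),
    hw (i - 1) (j + 1) k (by omega), hw i (j + 1) (k - 1) (by omega),
    hw i (j - 1) (k + 1) (by omega), hw (i - 1) j (k + 1) (by omega)]
  ring

theorem span_image_Iio_eq_of_adapted {V : Type*} [AddCommGroup V] [Module ℝ V] {n : ℕ}
    {F : ℕ → Submodule ℝ V} {f f' : ℕ → V} (hf : Adapted n F f) (hf' : Adapted n F f') :
    ∀ m ≤ n, span ℝ (f '' Set.Iio m) = span ℝ (f' '' Set.Iio m) :=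
  fun m hm => (hf m hm).symm.trans (hf' m hm)

theorem statement12_general (n : ℕ) (V : Type*) [AddCommGroup V] [Module ℝ V] [FiniteDimensional ℝ V]
    (hV : Module.finrank ℝ V = n)
    (F G H : ℕ → Submodule ℝ V)
    (ω ω' : AlternatingMap ℝ V ℝ (Fin n)) (hω : ω ≠ 0) (hω' : ω' ≠ 0)
    (f g h f' g' h' : ℕ → V)
    (hf : Adapted n F f) (hg : Adapted n G g) (hh : Adapted n H h)
    (hf' : Adapted n F f') (hg' : Adapted n G g') (hh' : Adapted n H h') :
    ∀ i j k : ℕ, 1 ≤ i → 1 ≤ j → 1 ≤ k → i + j + k = n →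
      tripleRatio n ω f g h i j k = tripleRatio n ω' f' g' h' i j k := by
  intro i j k hi hj hk hijk
  obtain ⟨t, ht, rfl⟩ := AlternatingMap.exists_ne_zero_eq_smul hV hω hω'
  obtain ⟨dF, hdF, hF⟩ := exists_isBlockScaling (span_image_Iio_eq_of_adapted hf hf')
  obtain ⟨dG, hdG, hG⟩ := exists_isBlockScaling (span_image_Iio_eq_of_adapted hg hg')
  obtain ⟨dH, hdH, hH⟩ := exists_isBlockScaling (span_image_Iio_eq_of_adapted hh hh')
  refine (tripleRatio_eq_of_wedge_eq_mul (p := fun a => t * dF a) (fun a => mul_ne_zero ht (hdF a))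
    hdG hdH (fun a b c habc => ?_) hi hj hk hijk).symm
  rw [wedge_smul, wedge_eq_mul_of_isBlockScaling ω hF hG hH habc]
  ring

theorem statement12 (n : ℕ) (V : Type*) [AddCommGroup V] [Module ℝ V] [FiniteDimensional ℝ V]
    (hV : Module.finrank ℝ V = n)
    (F G H : ℕ → Submodule ℝ V) (hF : IsFlag n F) (hG : IsFlag n G) (hH : IsFlag n H)
    (hFGH : TransverseTriple n F G H)
    (ω ω' : AlternatingMap ℝ V ℝ (Fin n)) (hω : ω ≠ 0) (hω' : ω' ≠ 0)
    (f g h f' g' h' : ℕ → V)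
    (hf : Adapted n F f) (hg : Adapted n G g) (hh : Adapted n H h)
    (hf' : Adapted n F f') (hg' : Adapted n G g') (hh' : Adapted n H h') :
    ∀ i j k : ℕ, 1 ≤ i → 1 ≤ j → 1 ≤ k → i + j + k = n →
      tripleRatio n ω f g h i j k = tripleRatio n ω' f' g' h' i j k :=
  statement12_general n V hV F G H ω ω' hω hω' f g h f' g' h' hf hg hh hf' hg' hh'
end
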